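/- Fix an integer c ≥ 1, ε > 0, η > 0, l ≥ 1, and thresholds T₁, …, T_l ∈ ℝ. Let Z_α have the Laplace distribution with scale 2ηc/ε and let Z₁, …, Z_l be i.i.d. with the Laplace distribution with scale 4ηc/ε, all mutually independent. For a vector q ∈ ℝ^l, let E(q) denote the event that q_i + Z_i > T_i + Z_α for every i < l and q_l + Z_l ≤ T_l + Z_α. Then for any two vectors q, q′ ∈ ℝ^l with |q_i − q′_i| ≤ η for every i, it holds that P(E(q)) ≤ exp(ε/c)·P(E(q′)). -/

import Mathlib

open MeasureTheory ProbabilityTheory Real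

/-- A real random variable `Z` has the Laplace distribution with scale `b > 0` (with respect to
the probability measure `P`) if it is measurable and its law has density
`x ↦ (1/(2b)) · exp(−|x|/b)` with respect to Lebesgue measure. -/
def HasLaplaceLaw {Ω : Type*} [MeasurableSpace Ω] (P : Measure Ω) (Z : Ω → ℝ) (b : ℝ) : Prop :=
  Measurable Z ∧
    P.map Z = volume.withDensity (fun x => ENNReal.ofReal ((1 / (2 * b)) * Real.exp (-|x| / b)))

/-- The single-epoch event of the sparse-vector mechanism with (data-independent) thresholds
`T₁, …, T_l` and below-threshold crossings: all queries before the last stay above their noisy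
threshold, and the last query falls below its noisy threshold. -/
def svEpochEvent {Ω : Type*} (l : ℕ) (T : Fin l → ℝ) (Z : Fin l → Ω → ℝ) (Zα : Ω → ℝ)
    (hl : 1 ≤ l) (q : Fin l → ℝ) : Set Ω :=
  {ω | (∀ i : Fin l, (i : ℕ) < l - 1 → q i + Z i ω > T i + Zα ω) ∧
    q ⟨l - 1, by omega⟩ + Z ⟨l - 1, by omega⟩ ω ≤ T ⟨l - 1, by omega⟩ + Zα ω}

/-!
Translate the noise: moving `Zα` by `-η` and the last `Z` by `q_l - q'_l - η`, a shift of size at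
most `2η`, carries `E(q)` into `E(q')`, because the first `l - 1` inequalities only get weaker and
the last one is preserved exactly. Translating a Laplace law of scale `b` by `s` multiplies it by
at most `exp(|s| / b)`, and by independence the joint law of the noise is a product measure, so
the translated law is at most `exp(η / (2ηc/ε) + 2η / (4ηc/ε)) = exp(ε/c)` times the original.
-/

open scoped ENNReal

namespace MeasureTheory.Measure

theorem sigmaFinite_smul_of_ne_top {α : Type*} [MeasurableSpace α] {μ : Measure α}
    [SigmaFinite μ] {c : ℝ≥0∞} (hc : c ≠ ∞) : SigmaFinite (c • μ) := by
  lift c to NNReal using hc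
  rw [← ENNReal.smul_def]
  infer_instance

theorem pi_mono {ι : Type*} [Fintype ι] {α : ι → Type*} [∀ i, MeasurableSpace (α i)]
    {μ ν : ∀ i, Measure (α i)} (h : ∀ i, μ i ≤ ν i) : Measure.pi μ ≤ Measure.pi ν := by
  refine Measure.le_iff.2 fun s hs => ?_
  rw [Measure.pi_def, Measure.pi_def, toMeasure_apply _ _ hs, toMeasure_apply _ _ hs]
  refine OuterMeasure.le_pi.2 (fun t _ => (OuterMeasure.pi_pi_le _ t).trans ?_) s
  exact Finset.prod_le_prod' fun i _ => h i (t i)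

theorem pi_le_smul_pi {ι : Type*} [Fintype ι] {α : ι → Type*} [∀ i, MeasurableSpace (α i)]
    {μ ν : ∀ i, Measure (α i)} [∀ i, SigmaFinite (ν i)] {c : ι → ℝ≥0∞} (hc : ∀ i, c i ≠ ∞)
    (h : ∀ i, μ i ≤ c i • ν i) : Measure.pi μ ≤ (∏ i, c i) • Measure.pi ν := by
  have := fun i => sigmaFinite_smul_of_ne_top (μ := ν i) (hc i)
  calc Measure.pi μ ≤ Measure.pi fun i => c i • ν i := pi_mono h
    _ = (∏ i, c i) • Measure.pi ν := pi_eq fun s hs => by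
        simp [Finset.prod_mul_distrib]

theorem map_pi_le_smul {ι : Type*} [Fintype ι] {α : ι → Type*} [∀ i, MeasurableSpace (α i)]
    {μ : ∀ i, Measure (α i)} [∀ i, SigmaFinite (μ i)] {f : ∀ i, α i → α i}
    (hf : ∀ i, Measurable (f i)) {c : ι → ℝ≥0∞} (hc : ∀ i, c i ≠ ∞)
    (h : ∀ i, (μ i).map (f i) ≤ c i • μ i) :
    (Measure.pi μ).map (fun x i => f i (x i)) ≤ (∏ i, c i) • Measure.pi μ := by
  have : ∀ i, SigmaFinite ((μ i).map (f i)) := fun i =>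
    have := sigmaFinite_smul_of_ne_top (μ := μ i) (hc i)
    sigmaFinite_of_le _ (h i)
  rw [pi_map_pi fun i => (hf i).aemeasurable]
  exact pi_le_smul_pi hc h

theorem map_prodMap_le_smul {α β : Type*} [MeasurableSpace α] [MeasurableSpace β]
    {μ : Measure α} {ν : Measure β} [SFinite μ] [SFinite ν] {f : α → α} {g : β → β}
    (hf : Measurable f) (hg : Measurable g) {a b : ℝ≥0∞}
    (hμ : μ.map f ≤ a • μ) (hν : ν.map g ≤ b • ν) :
    (μ.prod ν).map (Prod.map f g) ≤ (a * b) • μ.prod ν := by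
  rw [← map_prod_map μ ν hf hg, mul_smul, ← prod_smul_right, ← prod_smul_left]
  exact prod_mono hμ hν

theorem withDensity_map_add_right_le {G : Type*} [MeasurableSpace G] [AddGroup G]
    [MeasurableAdd G] [MeasurableSub G] {μ : Measure G} [μ.IsAddRightInvariant]
    {f : G → ℝ≥0∞} (hf : Measurable f) (t : G) {c : ℝ≥0∞} (h : ∀ x, f (x - t) ≤ c * f x) :
    (μ.withDensity f).map (· + t) ≤ c • μ.withDensity f := by
  refine Measure.le_iff.2 fun s hs => ?_
  rw [map_apply (measurable_add_const t) hs, withDensity_apply _ (measurable_add_const t hs),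
    smul_apply, withDensity_apply _ hs, smul_eq_mul, ← lintegral_const_mul c hf]
  calc ∫⁻ x in (· + t) ⁻¹' s, f x ∂μ = ∫⁻ y in s, f (y - t) ∂μ := by
        simpa using (measurePreserving_add_right μ t).setLIntegral_comp_preimage
          hs (hf.comp (measurable_sub_const t))
    _ ≤ ∫⁻ y in s, c * f y ∂μ := lintegral_mono fun y => h y

theorem measure_le_mul_of_subset_preimage {α : Type*} [MeasurableSpace α] {μ : Measure α}
    {τ : α → α} (hτ : AEMeasurable τ μ) {c : ℝ≥0∞} (hμ : μ.map τ ≤ c • μ) {s t : Set α}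
    (hst : s ⊆ τ ⁻¹' t) : μ s ≤ c * μ t :=
  calc μ s ≤ μ (τ ⁻¹' t) := measure_mono hst
    _ ≤ μ.map τ t := le_map_apply hτ t
    _ ≤ c * μ t := hμ t

end MeasureTheory.Measure

open MeasureTheory.Measure

theorem map_prod_pi_eq_of_indepFun {Ω ι : Type*} [Fintype ι] [MeasurableSpace Ω]
    {P : Measure Ω} [IsProbabilityMeasure P] {β : Type*} [MeasurableSpace β] {γ : ι → Type*}
    [∀ i, MeasurableSpace (γ i)] {X : Ω → β} {Y : ∀ i, Ω → γ i} (hX : Measurable X)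
    (hY : ∀ i, Measurable (Y i)) (hYindep : iIndepFun Y P)
    (hXY : IndepFun X (fun ω i => Y i ω) P) :
    P.map (fun ω => (X ω, fun i => Y i ω)) = (P.map X).prod (Measure.pi fun i => P.map (Y i)) := by
  rw [(indepFun_iff_map_prod_eq_prod_map_map hX.aemeasurable (by fun_prop)).1 hXY,
    hYindep.map_fun_eq_pi_map fun i => (hY i).aemeasurable]

noncomputable def laplaceMeasure (b : ℝ) : Measure ℝ :=
  volume.withDensity fun x => ENNReal.ofReal ((1 / (2 * b)) * exp (-|x| / b))

instance (b : ℝ) : SigmaFinite (laplaceMeasure b) :=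
  SigmaFinite.withDensity_ofReal _

theorem HasLaplaceLaw.map_eq {Ω : Type*} [MeasurableSpace Ω] {P : Measure Ω} {Z : Ω → ℝ} {b : ℝ}
    (h : HasLaplaceLaw P Z b) : P.map Z = laplaceMeasure b :=
  h.2

theorem laplaceMeasure_map_add_le {b : ℝ} (hb : 0 < b) (t : ℝ) :
    (laplaceMeasure b).map (· + t) ≤ ENNReal.ofReal (exp (|t| / b)) • laplaceMeasure b := by
  refine withDensity_map_add_right_le (by fun_prop) t fun x => ?_
  rw [← ENNReal.ofReal_mul (exp_nonneg _), mul_left_comm, ← exp_add, ← add_div]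
  gcongr
  linarith [abs_sub_abs_le_abs_sub x t]

theorem laplaceMeasure_pi_map_add_le {ι : Type*} [Fintype ι] {b : ℝ} (hb : 0 < b) (a : ι → ℝ) :
    (Measure.pi fun _ : ι => laplaceMeasure b).map (· + a) ≤
      ENNReal.ofReal (exp ((∑ i, |a i|) / b)) • Measure.pi fun _ : ι => laplaceMeasure b := by
  rw [Finset.sum_div, exp_sum, ENNReal.ofReal_prod_of_nonneg fun i _ => (exp_pos _).le]
  exact map_pi_le_smul (fun i => measurable_add_const (a i)) (fun _ => ENNReal.ofReal_ne_top)
    fun i => laplaceMeasure_map_add_le hb (a i)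

theorem laplaceMeasure_prod_pi_map_add_le {ι : Type*} [Fintype ι] {b₁ b₂ : ℝ} (hb₁ : 0 < b₁)
    (hb₂ : 0 < b₂) (s : ℝ) (a : ι → ℝ) :
    ((laplaceMeasure b₁).prod (Measure.pi fun _ : ι => laplaceMeasure b₂)).map
        (Prod.map (· + s) (· + a)) ≤
      ENNReal.ofReal (exp (|s| / b₁ + (∑ i, |a i|) / b₂)) •
        (laplaceMeasure b₁).prod (Measure.pi fun _ : ι => laplaceMeasure b₂) := by
  rw [exp_add, ENNReal.ofReal_mul (exp_pos _).le]
  exact map_prodMap_le_smul (measurable_add_const s) (measurable_add_const a)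
    (laplaceMeasure_map_add_le hb₁ s) (laplaceMeasure_pi_map_add_le hb₂ a)

theorem laplaceMeasure_prod_pi_map_shift_single_le {ι : Type*} [Fintype ι] [DecidableEq ι]
    {c ε η : ℝ} (hc : 0 < c) (hε : 0 < ε) (hη : 0 < η) (j : ι) {t : ℝ} (ht : |t| ≤ 2 * η) :
    ((laplaceMeasure (2 * η * c / ε)).prod
        (Measure.pi fun _ : ι => laplaceMeasure (4 * η * c / ε))).map
        (Prod.map (· + -η) (· + Pi.single j t)) ≤
      ENNReal.ofReal (exp (ε / c)) • (laplaceMeasure (2 * η * c / ε)).prod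
        (Measure.pi fun _ : ι => laplaceMeasure (4 * η * c / ε)) := by
  refine (laplaceMeasure_prod_pi_map_add_le (by positivity) (by positivity) _ _).trans ?_
  have hsum : ∑ i, |Pi.single j t i| = |t| := by
    simp [Pi.single_apply, apply_ite abs]
  rw [abs_neg, abs_of_pos hη, hsum]
  gcongr
  calc η / (2 * η * c / ε) + |t| / (4 * η * c / ε)
      ≤ η / (2 * η * c / ε) + 2 * η / (4 * η * c / ε) := by gcongr
    _ = ε / c := by field_simp; ring

theorem measurableSet_svEpochEvent {Ω : Type*} [MeasurableSpace Ω] {l : ℕ} (hl : 1 ≤ l)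
    (T : Fin l → ℝ) {Z : Fin l → Ω → ℝ} {Zα : Ω → ℝ} (hZ : ∀ i, Measurable (Z i))
    (hZα : Measurable Zα) (q : Fin l → ℝ) : MeasurableSet (svEpochEvent l T Z Zα hl q) := by
  simp only [svEpochEvent, Set.ofPred_and, Set.ofPred_forall]
  exact (MeasurableSet.iInter fun i => MeasurableSet.iInter fun _ =>
    measurableSet_lt (by fun_prop) (by fun_prop)).inter
    (measurableSet_le (by fun_prop) (by fun_prop))

theorem svEpochEvent_subset_preimage_shift {l : ℕ} (hl : 1 ≤ l) (T : Fin l → ℝ)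
    {q q' : Fin l → ℝ} {η : ℝ} (hqq' : ∀ i, |q i - q' i| ≤ η) {j : Fin l} (hj : (j : ℕ) = l - 1) :
    svEpochEvent l T (fun i (p : ℝ × (Fin l → ℝ)) => p.2 i) Prod.fst hl q ⊆
      Prod.map (· + -η) (· + Pi.single j (q j - q' j - η)) ⁻¹'
        svEpochEvent l T (fun i (p : ℝ × (Fin l → ℝ)) => p.2 i) Prod.fst hl q' := by
  have hj' : (⟨l - 1, by omega⟩ : Fin l) = j := Fin.ext hj.symm
  rintro p ⟨hbefore, hlast⟩
  refine ⟨fun i hi => ?_, ?_⟩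
  · have hij : i ≠ j := fun h => by simp [h, hj] at hi
    have := (abs_le.1 (hqq' i)).2
    simp only [Prod.map_fst, Prod.map_snd, Pi.add_apply, Pi.single_eq_of_ne hij, add_zero]
    linarith [hbefore i hi]
  · simp only [hj'] at hlast ⊢
    simp only [Prod.map_fst, Prod.map_snd, Pi.add_apply, Pi.single_eq_same]
    linarith

theorem sparseVector_single_epoch_privacy {Ω : Type*} [MeasurableSpace Ω] (P : Measure Ω)
    [IsProbabilityMeasure P] (c : ℕ) (hc : 1 ≤ c) (ε η : ℝ) (hε : 0 < ε) (hη : 0 < η)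
    (l : ℕ) (hl : 1 ≤ l) (T : Fin l → ℝ)
    (Zα : Ω → ℝ) (Z : Fin l → Ω → ℝ)
    (hZα : HasLaplaceLaw P Zα (2 * η * c / ε))
    (hZ : ∀ i : Fin l, HasLaplaceLaw P (Z i) (4 * η * c / ε))
    (hZindep : iIndepFun Z P)
    (hαindep : IndepFun Zα (fun ω => (fun i : Fin l => Z i ω)) P)
    (q q' : Fin l → ℝ) (hqq' : ∀ i : Fin l, |q i - q' i| ≤ η) :
    P (svEpochEvent l T Z Zα hl q) ≤
      ENNReal.ofReal (Real.exp (ε / c)) * P (svEpochEvent l T Z Zα hl q') := by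
  set j : Fin l := ⟨l - 1, by omega⟩
  let E := svEpochEvent l T (fun i (p : ℝ × (Fin l → ℝ)) => p.2 i) Prod.fst hl
  let V := fun ω => (Zα ω, fun i => Z i ω)
  have hV : Measurable V := hZα.1.prodMk (measurable_pi_lambda _ fun i => (hZ i).1)
  have hlaw : P.map V = (laplaceMeasure (2 * η * c / ε)).prod
      (Measure.pi fun _ : Fin l => laplaceMeasure (4 * η * c / ε)) := by
    rw [map_prod_pi_eq_of_indepFun hZα.1 (fun i => (hZ i).1) hZindep hαindep, hZα.map_eq,
      funext fun i => (hZ i).map_eq]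
  have hshift : |q j - q' j - η| ≤ 2 * η := by
    have := abs_le.1 (hqq' j)
    exact abs_le.2 ⟨by linarith, by linarith⟩
  have hmap : (P.map V).map (Prod.map (· + -η) (· + Pi.single j (q j - q' j - η))) ≤
      ENNReal.ofReal (exp (ε / c)) • P.map V := by
    rw [hlaw]
    exact laplaceMeasure_prod_pi_map_shift_single_le (by exact_mod_cast hc) hε hη j hshift
  calc P (svEpochEvent l T Z Zα hl q) = P (V ⁻¹' E q) := rfl
    _ ≤ P.map V (E q) := le_map_apply hV.aemeasurable _
    _ ≤ ENNReal.ofReal (exp (ε / c)) * P.map V (E q') :=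
      measure_le_mul_of_subset_preimage (by fun_prop) hmap
        (svEpochEvent_subset_preimage_shift hl T hqq' rfl)
    _ = ENNReal.ofReal (exp (ε / c)) * P (svEpochEvent l T Z Zα hl q') := by
      rw [map_apply hV (measurableSet_svEpochEvent hl T (fun i => by fun_prop) measurable_fst q')]
      rfl
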